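/- Suppose T : L^∞(Ω,F) → ℝ satisfies T(0) = 0, (G-Mo), (G-QL), (G-PC). If ĝ and g̃ are both bounded G-measurable functions with T(f·1_A) = T(ĝ·1_A) and T(f·1_A) = T(g̃·1_A) for all A ∈ G, then {ĝ ≠ g̃} ∈ N_G. -/
import Mathlib


open Filter Topology MeasureTheory

/-- Bounded measurable real-valued functions w.r.t. a σ-algebra `mG`. -/
def BddMeas {Ω : Type*} (mG : MeasurableSpace Ω) (f : Ω → ℝ) : Prop :=
  Measurable[mG] f ∧ ∃ C : ℝ, ∀ ω, |f ω| ≤ C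

/-- The class of irrelevant (null) events in `mG` for the functional `T`. -/
def NullG {Ω : Type*} (mG : MeasurableSpace Ω) (T : (Ω → ℝ) → ℝ) : Set (Set Ω) :=
  {N | MeasurableSet[mG] N ∧ ∀ g₁ g₂ : Ω → ℝ, BddMeas mG g₁ → BddMeas mG g₂ →
    T (g₁ + N.indicator g₂) = T g₁}

/-- (G-Mo): `T` is `G`-monotone. -/
def GMo {Ω : Type*} (mG : MeasurableSpace Ω) (T : (Ω → ℝ) → ℝ) : Prop :=
  ∀ x y : ℝ, x < y → ∀ g : Ω → ℝ, BddMeas mG g → ∀ A : Set Ω,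
    MeasurableSet[mG] A → A ∉ NullG mG T →
    T (A.indicator (fun _ => x) + Aᶜ.indicator g) <
      T (A.indicator (fun _ => y) + Aᶜ.indicator g)

/-- (G-QL): `T` is `G`-quasilinear. -/
def GQL {Ω : Type*} (mG : MeasurableSpace Ω) (T : (Ω → ℝ) → ℝ) : Prop :=
  ∀ g₁ g₂ : Ω → ℝ, BddMeas mG g₁ → BddMeas mG g₂ → ∀ A : Set Ω, MeasurableSet[mG] A →
    (∃ gb : Ω → ℝ, BddMeas mG gb ∧
      T (A.indicator g₁ + Aᶜ.indicator gb) ≤ T (A.indicator g₂ + Aᶜ.indicator gb)) →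
    ∀ g : Ω → ℝ, BddMeas mG g →
      T (A.indicator g₁ + Aᶜ.indicator g) ≤ T (A.indicator g₂ + Aᶜ.indicator g)

/-- (G-PC): `T` is `G`-pointwise continuous. -/
def GPC {Ω : Type*} (mG : MeasurableSpace Ω) (T : (Ω → ℝ) → ℝ) : Prop :=
  ∀ (gn : ℕ → Ω → ℝ) (g : Ω → ℝ), (∀ n, BddMeas mG (gn n)) → BddMeas mG g →
    (∃ C : ℝ, ∀ n ω, |gn n ω| ≤ C) →
    (∀ ω, Tendsto (fun n => gn n ω) atTop (𝓝 (g ω))) →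
    Tendsto (fun n => T (gn n)) atTop (𝓝 (T g))

/-- The sup norm of a bounded function. -/
noncomputable def supNorm {Ω : Type*} (f : Ω → ℝ) : ℝ := ⨆ ω, |f ω|

/-- (G-PS): `T` is `G`-pasting at `f`. -/
def GPS {Ω : Type*} (mG : MeasurableSpace Ω) (T : (Ω → ℝ) → ℝ) (f : Ω → ℝ) : Prop :=
  ∀ A₁ A₂ : Set Ω, MeasurableSet[mG] A₁ → MeasurableSet[mG] A₂ → Disjoint A₁ A₂ →
    ∀ x₁ x₂ : ℝ, T (A₁.indicator f) = T (A₁.indicator fun _ => x₁) →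
      T (A₂.indicator f) = T (A₂.indicator fun _ => x₂) →
      T (A₁.indicator f + A₂.indicator f) =
        T (A₁.indicator (fun _ => x₁) + A₂.indicator fun _ => x₂)

/-- (G-NB): `T` is `G`-norm bounded at `f`. -/
def GNB {Ω : Type*} (mG : MeasurableSpace Ω) (T : (Ω → ℝ) → ℝ) (f : Ω → ℝ) : Prop :=
  ∀ A : Set Ω, MeasurableSet[mG] A →
    T (A.indicator fun _ => -(supNorm f)) ≤ T (A.indicator f) ∧
    T (A.indicator f) ≤ T (A.indicator fun _ => supNorm f)

section AuxST

variable {Ω : Type*} {mG : MeasurableSpace Ω} {T : (Ω → ℝ) → ℝ}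

lemma bddMeas_const (c : ℝ) : BddMeas mG (fun _ : Ω => c) :=
  ⟨measurable_const, |c|, fun _ => le_rfl⟩

lemma bddMeas_zero : BddMeas mG (0 : Ω → ℝ) := bddMeas_const 0

lemma BddMeas.add {a b : Ω → ℝ} (ha : BddMeas mG a) (hb : BddMeas mG b) :
    BddMeas mG (a + b) := by
  obtain ⟨Ca, hCa⟩ := ha.2; obtain ⟨Cb, hCb⟩ := hb.2
  exact ⟨ha.1.add hb.1, Ca + Cb, fun ω =>
    (abs_add_le _ _).trans (add_le_add (hCa ω) (hCb ω))⟩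

lemma BddMeas.indicator {g : Ω → ℝ} (hg : BddMeas mG g) {A : Set Ω}
    (hA : MeasurableSet[mG] A) : BddMeas mG (A.indicator g) := by
  obtain ⟨C, hC⟩ := hg.2
  refine ⟨hg.1.indicator hA, C, fun ω => ?_⟩
  by_cases hω : ω ∈ A
  · simpa [Set.indicator_of_mem hω] using hC ω
  · simp only [Set.indicator_of_notMem hω, abs_zero]
    exact (abs_nonneg _).trans (hC ω)

lemma nullG_subset {N N' : Set Ω} (hN : N ∈ NullG mG T)
    (hN' : MeasurableSet[mG] N') (hss : N' ⊆ N) : N' ∈ NullG mG T := by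
  refine ⟨hN', fun g₁ g₂ hg₁ hg₂ => ?_⟩
  have : N.indicator (N'.indicator g₂) = N'.indicator g₂ := by
    rw [Set.indicator_indicator, Set.inter_eq_self_of_subset_right hss]
  calc T (g₁ + N'.indicator g₂) = T (g₁ + N.indicator (N'.indicator g₂)) := by rw [this]
    _ = T g₁ := hN.2 g₁ _ hg₁ (hg₂.indicator hN')

lemma nullG_union {N₁ N₂ : Set Ω} (hN₁ : N₁ ∈ NullG mG T) (hN₂ : N₂ ∈ NullG mG T) :
    N₁ ∪ N₂ ∈ NullG mG T := by
  refine ⟨hN₁.1.union hN₂.1, fun g₁ g₂ hg₁ hg₂ => ?_⟩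
  have hd : N₂ \ N₁ ∈ NullG mG T :=
    nullG_subset hN₂ (hN₂.1.diff hN₁.1) Set.diff_subset
  have key : g₁ + (N₁ ∪ N₂).indicator g₂
      = (g₁ + N₁.indicator g₂) + (N₂ \ N₁).indicator g₂ := by
    funext ω
    by_cases h1 : ω ∈ N₁
    · simp [Set.indicator_of_mem, Set.indicator_of_notMem, h1, Set.mem_union,
        Set.mem_diff]
    · by_cases h2 : ω ∈ N₂ <;>
        simp [Set.indicator_of_mem, Set.indicator_of_notMem, h1, h2, Set.mem_union,
          Set.mem_diff]
  rw [key, hd.2 _ g₂ (hg₁.add (hg₂.indicator hN₁.1)) hg₂, hN₁.2 g₁ g₂ hg₁ hg₂]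

lemma nullG_iUnion (hPC : GPC mG T) (N : ℕ → Set Ω) (hN : ∀ n, N n ∈ NullG mG T) :
    (⋃ n, N n) ∈ NullG mG T := by
  set M : ℕ → Set Ω := fun n => ⋃ i ∈ Finset.range (n + 1), N i with hM
  have hMnull : ∀ n, M n ∈ NullG mG T := by
    intro n
    induction n with
    | zero => simpa [hM] using hN 0
    | succ k ih =>
      have : M (k + 1) = M k ∪ N (k + 1) := by
        show (⋃ i ∈ Finset.range (k + 1 + 1), N i) = _
        rw [Finset.range_add_one, Finset.set_biUnion_insert, Set.union_comm]
      rw [this]; exact nullG_union ih (hN (k + 1))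
  refine ⟨MeasurableSet.iUnion (fun n => (hN n).1), fun g₁ g₂ hg₁ hg₂ => ?_⟩
  obtain ⟨C₁, hC₁⟩ := hg₁.2; obtain ⟨C₂, hC₂⟩ := hg₂.2
  have hUmeas : MeasurableSet[mG] (⋃ n, N n) := MeasurableSet.iUnion (fun n => (hN n).1)
  have hconv : Tendsto (fun n => T (g₁ + (M n).indicator g₂)) atTop
      (𝓝 (T (g₁ + (⋃ n, N n).indicator g₂))) := by
    apply hPC
    · exact fun n => hg₁.add (hg₂.indicator (hMnull n).1)
    · exact hg₁.add (hg₂.indicator hUmeas)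
    · refine ⟨C₁ + C₂, fun n ω => ?_⟩
      refine (abs_add_le _ _).trans (add_le_add (hC₁ ω) ?_)
      by_cases hω : ω ∈ M n
      · simpa [Set.indicator_of_mem hω] using hC₂ ω
      · simp only [Set.indicator_of_notMem hω, abs_zero]
        exact (abs_nonneg _).trans (hC₂ ω)
    · intro ω
      by_cases hω : ω ∈ ⋃ n, N n
      · obtain ⟨m, hm⟩ := Set.mem_iUnion.mp hω
        have : ∀ n ≥ m, (g₁ + (M n).indicator g₂) ω = (g₁ + (⋃ n, N n).indicator g₂) ω := by
          intro n hn
          have hωM : ω ∈ M n :=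
            Set.mem_biUnion (Finset.mem_range.mpr (Nat.lt_succ_of_le hn)) hm
          simp [Set.indicator_of_mem hωM, Set.indicator_of_mem hω]
        exact tendsto_atTop_of_eventually_const this
      · have hωn : ∀ n, ω ∉ M n := by
          intro n hc
          obtain ⟨i, _, hi⟩ := Set.mem_iUnion₂.mp hc
          exact hω (Set.mem_iUnion.mpr ⟨i, hi⟩)
        have : ∀ n ≥ 0, (g₁ + (M n).indicator g₂) ω = (g₁ + (⋃ n, N n).indicator g₂) ω := by
          intro n _
          simp [Set.indicator_of_notMem (hωn n), Set.indicator_of_notMem hω]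
        exact tendsto_atTop_of_eventually_const this
  have heq : ∀ n, T (g₁ + (M n).indicator g₂) = T g₁ :=
    fun n => (hMnull n).2 g₁ g₂ hg₁ hg₂
  have : Tendsto (fun _ : ℕ => T g₁) atTop (𝓝 (T (g₁ + (⋃ n, N n).indicator g₂))) := by
    simpa [heq] using hconv
  exact tendsto_nhds_unique this tendsto_const_nhds

end AuxST

section AuxMono

variable {Ω : Type*} {mG : MeasurableSpace Ω} {T : (Ω → ℝ) → ℝ}

lemma repl_one (hMo : GMo mG T) {P : Set Ω} (hPmeas : MeasurableSet[mG] P)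
    {x c : ℝ} (hxc : x ≤ c) {G : Ω → ℝ} (hG : BddMeas mG G) :
    T (P.indicator (fun _ => x) + Pᶜ.indicator G) ≤
      T (P.indicator (fun _ => c) + Pᶜ.indicator G) := by
  rcases eq_or_lt_of_le hxc with heq | hlt
  · rw [heq]
  · by_cases hPnull : P ∈ NullG mG T
    · have key : ∀ v : ℝ, T (P.indicator (fun _ => v) + Pᶜ.indicator G)
          = T (Pᶜ.indicator G) := by
        intro v
        rw [add_comm]
        exact hPnull.2 _ _ (hG.indicator hPmeas.compl) (bddMeas_const v)
      rw [key x, key c]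
    · exact le_of_lt (hMo x c hlt G hG P hPmeas hPnull)

lemma repl_finset (hMo : GMo mG T) {A : Set Ω} (hA : MeasurableSet[mG] A) (c : ℝ)
    {g : Ω → ℝ} (hg : BddMeas mG g) :
    ∀ S : Finset ℝ, ∀ h : Ω → ℝ, BddMeas mG h →
      (∀ ω ∈ A, h ω = c ∨ h ω ∈ S) →
      ((∀ x ∈ S, x ≤ c) →
        T (A.indicator h + Aᶜ.indicator g) ≤
          T (A.indicator (fun _ => c) + Aᶜ.indicator g)) ∧
      ((∀ x ∈ S, c ≤ x) →
        T (A.indicator (fun _ => c) + Aᶜ.indicator g) ≤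
          T (A.indicator h + Aᶜ.indicator g)) := by
  intro S
  induction S using Finset.induction_on with
  | empty =>
    intro h hh hmem
    have : A.indicator h = A.indicator (fun _ => c) :=
      Set.indicator_congr (fun ω hω => (hmem ω hω).resolve_right (by simp))
    rw [this]
    exact ⟨fun _ => le_rfl, fun _ => le_rfl⟩
  | @insert x S hxS IH =>
    intro h hh hmem
    set P : Set Ω := A ∩ h ⁻¹' {x} with hPdef
    have hPmeas : MeasurableSet[mG] P := hA.inter (hh.1 (measurableSet_singleton x))
    set h' : Ω → ℝ := fun ω => if h ω = x then c else h ω with hh'def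
    have hh' : BddMeas mG h' := by
      obtain ⟨C, hC⟩ := hh.2
      refine ⟨Measurable.ite (hh.1 (measurableSet_singleton x)) measurable_const hh.1,
        max |c| C, fun ω => ?_⟩
      by_cases hω : h ω = x
      · simp [hh'def, hω, le_max_left]
      · simp only [hh'def, hω, if_false]
        exact (hC ω).trans (le_max_right _ _)
    have hG : BddMeas mG (A.indicator h' + Aᶜ.indicator g) :=
      (hh'.indicator hA).add (hg.indicator hA.compl)
    have id1 : A.indicator h + Aᶜ.indicator g
        = P.indicator (fun _ => x) + Pᶜ.indicator (A.indicator h' + Aᶜ.indicator g) := by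
      funext ω
      by_cases hωP : ω ∈ P
      · have hωA : ω ∈ A := hωP.1
        have hωx : h ω = x := hωP.2
        simp [Set.indicator_apply, Set.mem_compl_iff, hωA, hωP, hωx]
      · by_cases hωA : ω ∈ A
        · have hωx : h ω ≠ x := fun hc => hωP ⟨hωA, hc⟩
          simp [Set.indicator_apply, Set.mem_compl_iff, hωA, hωP, hh'def, hωx]
        · simp [Set.indicator_apply, Set.mem_compl_iff, hωA, hωP]
    have id2 : A.indicator h' + Aᶜ.indicator g
        = P.indicator (fun _ => c) + Pᶜ.indicator (A.indicator h' + Aᶜ.indicator g) := by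
      funext ω
      by_cases hωP : ω ∈ P
      · have hωA : ω ∈ A := hωP.1
        have hωx : h ω = x := hωP.2
        have hc : h' ω = c := by simp [hh'def, hωx]
        simp [Set.indicator_apply, Set.mem_compl_iff, hωA, hωP, hc]
      · simp [Set.indicator_apply, Set.mem_compl_iff, hωP]
    have hmem' : ∀ ω ∈ A, h' ω = c ∨ h' ω ∈ S := by
      intro ω hωA
      by_cases hωx : h ω = x
      · left; simp [hh'def, hωx]
      · have heqh : h' ω = h ω := by simp [hh'def, hωx]
        rcases hmem ω hωA with hc | hmem''
        · left; rw [heqh, hc]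
        · right; rw [heqh]
          exact (Finset.mem_insert.mp hmem'').resolve_left hωx
    constructor
    · intro hS
      have hxc : x ≤ c := hS x (Finset.mem_insert_self x S)
      have step1 : T (A.indicator h + Aᶜ.indicator g)
          ≤ T (A.indicator h' + Aᶜ.indicator g) := by
        conv_lhs => rw [id1]
        conv_rhs => rw [id2]
        exact repl_one hMo hPmeas hxc hG
      exact step1.trans ((IH h' hh' hmem').1
        (fun y hy => hS y (Finset.mem_insert_of_mem hy)))
    · intro hS
      have hxc : c ≤ x := hS x (Finset.mem_insert_self x S)
      have step1 : T (A.indicator h' + Aᶜ.indicator g)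
          ≤ T (A.indicator h + Aᶜ.indicator g) := by
        conv_lhs => rw [id2]
        conv_rhs => rw [id1]
        exact repl_one hMo hPmeas hxc hG
      exact le_trans ((IH h' hh' hmem').2
        (fun y hy => hS y (Finset.mem_insert_of_mem hy))) step1

end AuxMono

section AuxMono2

variable {Ω : Type*} {mG : MeasurableSpace Ω} {T : (Ω → ℝ) → ℝ}

lemma mono_le (hMo : GMo mG T) (hPC : GPC mG T) {A : Set Ω} (hA : MeasurableSet[mG] A)
    {h : Ω → ℝ} (hh : BddMeas mG h) {c : ℝ} (hle : ∀ ω ∈ A, h ω ≤ c)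
    {g : Ω → ℝ} (hg : BddMeas mG g) :
    T (A.indicator h + Aᶜ.indicator g) ≤
      T (A.indicator (fun _ => c) + Aᶜ.indicator g) := by
  obtain ⟨C, hC⟩ := hh.2
  obtain ⟨Cg, hCg⟩ := hg.2
  set hn : ℕ → Ω → ℝ :=
    fun n ω => min c ((⌈((n : ℝ) + 1) * h ω⌉ : ℝ) / ((n : ℝ) + 1)) with hhn
  have hk : ∀ n : ℕ, (0 : ℝ) < (n : ℝ) + 1 := fun n => by positivity
  -- pointwise bracketing on all of Ω
  have hlow : ∀ (n : ℕ) ω, h ω ≤ (⌈((n : ℝ) + 1) * h ω⌉ : ℝ) / ((n : ℝ) + 1) := by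
    intro n ω
    rw [le_div_iff₀ (hk n)]
    calc h ω * ((n : ℝ) + 1) = ((n : ℝ) + 1) * h ω := by ring
      _ ≤ _ := Int.le_ceil _
  have hup : ∀ (n : ℕ) ω, (⌈((n : ℝ) + 1) * h ω⌉ : ℝ) / ((n : ℝ) + 1)
      ≤ h ω + 1 / ((n : ℝ) + 1) := by
    intro n ω
    rw [div_le_iff₀ (hk n)]
    have := Int.ceil_lt_add_one (((n : ℝ) + 1) * h ω)
    have hkn := hk n
    have hone : 1 / ((n : ℝ) + 1) * ((n : ℝ) + 1) = 1 := one_div_mul_cancel (ne_of_gt hkn)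
    nlinarith [this, hone]
  have hnbdd : ∀ n ω, |hn n ω| ≤ max |c| (C + 1) := by
    intro n ω
    have h1 : |h ω| ≤ C := hC ω
    have h2 := hlow n ω
    have h3 := hup n ω
    have hinv : 1 / ((n : ℝ) + 1) ≤ 1 := by
      rw [div_le_one (hk n)]; simp
    rw [abs_le]
    constructor
    · have : -(max |c| (C + 1)) ≤ min c ((⌈((n : ℝ) + 1) * h ω⌉ : ℝ) / ((n : ℝ) + 1)) := by
        apply le_min
        · calc -(max |c| (C + 1)) ≤ -|c| := neg_le_neg (le_max_left _ _)
            _ ≤ c := neg_abs_le c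
        · calc -(max |c| (C + 1)) ≤ -(C + 1) := neg_le_neg (le_max_right _ _)
            _ ≤ h ω := by cases' abs_le.mp h1 with hl hr; linarith
            _ ≤ _ := h2
      simpa [hhn] using this
    · calc hn n ω ≤ c := min_le_left _ _
        _ ≤ |c| := le_abs_self c
        _ ≤ max |c| (C + 1) := le_max_left _ _
  have hnmeas : ∀ n, BddMeas mG (hn n) := by
    intro n
    refine ⟨?_, max |c| (C + 1), hnbdd n⟩
    apply Measurable.min measurable_const
    exact (measurable_from_top.comp ((hh.1.const_mul _).ceil)).div_const _
  -- values lie in a finite set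
  have hval : ∀ n, ∀ ω ∈ A, hn n ω = c ∨ hn n ω ∈
      (Finset.Icc (-(⌈((n : ℝ) + 1) * C⌉ + 1)) (⌈((n : ℝ) + 1) * C⌉ + 1)).image
        (fun m : ℤ => min c ((m : ℝ) / ((n : ℝ) + 1))) := by
    intro n ω _
    right
    refine Finset.mem_image.mpr ⟨⌈((n : ℝ) + 1) * h ω⌉, ?_, rfl⟩
    rw [Finset.mem_Icc]
    have h1 : |h ω| ≤ C := hC ω
    have habs := abs_le.mp h1
    constructor
    · have : (-(⌈((n : ℝ) + 1) * C⌉ + 1) : ℝ) ≤ (⌈((n : ℝ) + 1) * h ω⌉ : ℝ) := by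
        have hcC : ((n : ℝ) + 1) * C ≤ (⌈((n : ℝ) + 1) * C⌉ : ℝ) := Int.le_ceil _
        have : ((n : ℝ) + 1) * (-C) ≤ ((n : ℝ) + 1) * h ω := by
          apply mul_le_mul_of_nonneg_left _ (le_of_lt (hk n)); linarith
        have h4 : ((n : ℝ) + 1) * h ω ≤ (⌈((n : ℝ) + 1) * h ω⌉ : ℝ) := Int.le_ceil _
        push_cast
        nlinarith
      exact_mod_cast this
    · have : (⌈((n : ℝ) + 1) * h ω⌉ : ℤ) ≤ ⌈((n : ℝ) + 1) * C⌉ :=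
        Int.ceil_le_ceil (by
          apply mul_le_mul_of_nonneg_left habs.2 (le_of_lt (hk n)))
      omega
    done
  -- each approximant satisfies the inequality
  have hstep : ∀ n, T (A.indicator (hn n) + Aᶜ.indicator g) ≤
      T (A.indicator (fun _ => c) + Aᶜ.indicator g) := by
    intro n
    refine (repl_finset hMo hA c hg _ (hn n) (hnmeas n) (hval n)).1 ?_
    intro x hx
    obtain ⟨m, _, rfl⟩ := Finset.mem_image.mp hx
    exact min_le_left _ _
  -- convergence
  have hconv : Tendsto (fun n => T (A.indicator (hn n) + Aᶜ.indicator g)) atTop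
      (𝓝 (T (A.indicator h + Aᶜ.indicator g))) := by
    apply hPC
    · exact fun n => ((hnmeas n).indicator hA).add (hg.indicator hA.compl)
    · exact (hh.indicator hA).add (hg.indicator hA.compl)
    · refine ⟨max |c| (C + 1) + Cg, fun n ω => ?_⟩
      refine (abs_add_le _ _).trans (add_le_add ?_ ?_)
      · by_cases hω : ω ∈ A
        · simpa [Set.indicator_of_mem hω] using hnbdd n ω
        · simp only [Set.indicator_of_notMem hω, abs_zero]
          positivity
      · by_cases hω : ω ∈ Aᶜ
        · simpa [Set.indicator_of_mem hω] using hCg ω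
        · simp only [Set.indicator_of_notMem hω, abs_zero]
          exact (abs_nonneg _).trans (hCg ω)
    · intro ω
      by_cases hω : ω ∈ A
      · have hωc : ω ∉ Aᶜ := by simp [hω]
        simp only [Pi.add_apply, Set.indicator_of_mem hω, Set.indicator_of_notMem hωc, add_zero]
        have htend : Tendsto (fun n : ℕ =>
            (⌈((n : ℝ) + 1) * h ω⌉ : ℝ) / ((n : ℝ) + 1)) atTop (𝓝 (h ω)) := by
          apply tendsto_of_tendsto_of_tendsto_of_le_of_le
            (tendsto_const_nhds : Tendsto (fun _ : ℕ => h ω) atTop (𝓝 (h ω)))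
            (b := atTop) (h := fun n : ℕ => h ω + 1 / ((n : ℝ) + 1))
          · have : Tendsto (fun n : ℕ => h ω + 1 / ((n : ℝ) + 1)) atTop (𝓝 (h ω + 0)) :=
              tendsto_const_nhds.add tendsto_one_div_add_atTop_nhds_zero_nat
            simpa using this
          · exact fun n => hlow n ω
          · exact fun n => hup n ω
        have := (tendsto_const_nhds :
          Tendsto (fun _ : ℕ => c) atTop (𝓝 c)).min htend
        have hmin : min c (h ω) = h ω := min_eq_right (hle ω hω)
        simpa [hhn, hmin] using this
      · have hωc : ω ∈ Aᶜ := hω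
        simp only [Pi.add_apply, Set.indicator_of_notMem hω, Set.indicator_of_mem hωc, zero_add]
        exact tendsto_const_nhds
  exact le_of_tendsto' hconv hstep

lemma mono_ge (hMo : GMo mG T) (hPC : GPC mG T) {A : Set Ω} (hA : MeasurableSet[mG] A)
    {h : Ω → ℝ} (hh : BddMeas mG h) {c : ℝ} (hle : ∀ ω ∈ A, c ≤ h ω)
    {g : Ω → ℝ} (hg : BddMeas mG g) :
    T (A.indicator (fun _ => c) + Aᶜ.indicator g) ≤
      T (A.indicator h + Aᶜ.indicator g) := by
  obtain ⟨C, hC⟩ := hh.2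
  obtain ⟨Cg, hCg⟩ := hg.2
  set hn : ℕ → Ω → ℝ :=
    fun n ω => max c ((⌊((n : ℝ) + 1) * h ω⌋ : ℝ) / ((n : ℝ) + 1)) with hhn
  have hk : ∀ n : ℕ, (0 : ℝ) < (n : ℝ) + 1 := fun n => by positivity
  have hup : ∀ (n : ℕ) ω, (⌊((n : ℝ) + 1) * h ω⌋ : ℝ) / ((n : ℝ) + 1) ≤ h ω := by
    intro n ω
    rw [div_le_iff₀ (hk n)]
    calc (⌊((n : ℝ) + 1) * h ω⌋ : ℝ) ≤ ((n : ℝ) + 1) * h ω := Int.floor_le _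
      _ = h ω * ((n : ℝ) + 1) := by ring
  have hlow : ∀ (n : ℕ) ω, h ω - 1 / ((n : ℝ) + 1)
      ≤ (⌊((n : ℝ) + 1) * h ω⌋ : ℝ) / ((n : ℝ) + 1) := by
    intro n ω
    rw [le_div_iff₀ (hk n)]
    have := Int.sub_one_lt_floor (((n : ℝ) + 1) * h ω)
    have hkn := hk n
    have hone : 1 / ((n : ℝ) + 1) * ((n : ℝ) + 1) = 1 := one_div_mul_cancel (ne_of_gt hkn)
    nlinarith [this, hone]
  have hnbdd : ∀ n ω, |hn n ω| ≤ max |c| (C + 1) := by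
    intro n ω
    have h1 : |h ω| ≤ C := hC ω
    have habs := abs_le.mp h1
    have h2 := hlow n ω
    have h3 := hup n ω
    have hinv : 1 / ((n : ℝ) + 1) ≤ 1 := by
      rw [div_le_one (hk n)]; simp
    rw [abs_le]
    constructor
    · have : -(max |c| (C + 1)) ≤ c := by
        calc -(max |c| (C + 1)) ≤ -|c| := neg_le_neg (le_max_left _ _)
          _ ≤ c := neg_abs_le c
      exact le_trans this (le_max_left _ _)
    · apply max_le
      · exact (le_abs_self c).trans (le_max_left _ _)
      · calc (⌊((n : ℝ) + 1) * h ω⌋ : ℝ) / ((n : ℝ) + 1) ≤ h ω := h3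
          _ ≤ C := habs.2
          _ ≤ C + 1 := by linarith
          _ ≤ max |c| (C + 1) := le_max_right _ _
  have hnmeas : ∀ n, BddMeas mG (hn n) := by
    intro n
    refine ⟨?_, max |c| (C + 1), hnbdd n⟩
    apply Measurable.max measurable_const
    exact (measurable_from_top.comp ((hh.1.const_mul _).floor)).div_const _
  have hval : ∀ n, ∀ ω ∈ A, hn n ω = c ∨ hn n ω ∈
      (Finset.Icc (-(⌈((n : ℝ) + 1) * C⌉ + 1)) (⌈((n : ℝ) + 1) * C⌉ + 1)).image
        (fun m : ℤ => max c ((m : ℝ) / ((n : ℝ) + 1))) := by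
    intro n ω _
    right
    refine Finset.mem_image.mpr ⟨⌊((n : ℝ) + 1) * h ω⌋, ?_, rfl⟩
    rw [Finset.mem_Icc]
    have habs := abs_le.mp (hC ω)
    have hcC : ((n : ℝ) + 1) * C ≤ (⌈((n : ℝ) + 1) * C⌉ : ℝ) := Int.le_ceil _
    constructor
    · have : (-(⌈((n : ℝ) + 1) * C⌉ + 1) : ℝ) ≤ (⌊((n : ℝ) + 1) * h ω⌋ : ℝ) := by
        have h4 : ((n : ℝ) + 1) * h ω - 1 < (⌊((n : ℝ) + 1) * h ω⌋ : ℝ) :=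
          Int.sub_one_lt_floor _
        have h5 : ((n : ℝ) + 1) * (-C) ≤ ((n : ℝ) + 1) * h ω :=
          mul_le_mul_of_nonneg_left (by linarith [habs.1]) (le_of_lt (hk n))
        push_cast
        nlinarith
      exact_mod_cast this
    · have h4 : (⌊((n : ℝ) + 1) * h ω⌋ : ℝ) ≤ ((n : ℝ) + 1) * h ω := Int.floor_le _
      have h5 : ((n : ℝ) + 1) * h ω ≤ ((n : ℝ) + 1) * C :=
        mul_le_mul_of_nonneg_left habs.2 (le_of_lt (hk n))
      have : (⌊((n : ℝ) + 1) * h ω⌋ : ℝ) ≤ (⌈((n : ℝ) + 1) * C⌉ + 1 : ℝ) := by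
        push_cast; nlinarith
      exact_mod_cast this
  have hstep : ∀ n, T (A.indicator (fun _ => c) + Aᶜ.indicator g) ≤
      T (A.indicator (hn n) + Aᶜ.indicator g) := by
    intro n
    refine (repl_finset hMo hA c hg _ (hn n) (hnmeas n) (hval n)).2 ?_
    intro x hx
    obtain ⟨m, _, rfl⟩ := Finset.mem_image.mp hx
    exact le_max_left _ _
  have hconv : Tendsto (fun n => T (A.indicator (hn n) + Aᶜ.indicator g)) atTop
      (𝓝 (T (A.indicator h + Aᶜ.indicator g))) := by
    apply hPC
    · exact fun n => ((hnmeas n).indicator hA).add (hg.indicator hA.compl)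
    · exact (hh.indicator hA).add (hg.indicator hA.compl)
    · refine ⟨max |c| (C + 1) + Cg, fun n ω => ?_⟩
      refine (abs_add_le _ _).trans (add_le_add ?_ ?_)
      · by_cases hω : ω ∈ A
        · simpa [Set.indicator_of_mem hω] using hnbdd n ω
        · simp only [Set.indicator_of_notMem hω, abs_zero]
          positivity
      · by_cases hω : ω ∈ Aᶜ
        · simpa [Set.indicator_of_mem hω] using hCg ω
        · simp only [Set.indicator_of_notMem hω, abs_zero]
          exact (abs_nonneg _).trans (hCg ω)
    · intro ω
      by_cases hω : ω ∈ A
      · have hωc : ω ∉ Aᶜ := by simp [hω]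
        simp only [Pi.add_apply, Set.indicator_of_mem hω, Set.indicator_of_notMem hωc, add_zero]
        have htend : Tendsto (fun n : ℕ =>
            (⌊((n : ℝ) + 1) * h ω⌋ : ℝ) / ((n : ℝ) + 1)) atTop (𝓝 (h ω)) := by
          apply tendsto_of_tendsto_of_tendsto_of_le_of_le
            (g := fun n : ℕ => h ω - 1 / ((n : ℝ) + 1))
            (h := fun _ : ℕ => h ω) (b := atTop)
          · have : Tendsto (fun n : ℕ => h ω - 1 / ((n : ℝ) + 1)) atTop (𝓝 (h ω - 0)) :=
              tendsto_const_nhds.sub tendsto_one_div_add_atTop_nhds_zero_nat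
            simpa using this
          · exact tendsto_const_nhds
          · exact fun n => hlow n ω
          · exact fun n => hup n ω
        have := (tendsto_const_nhds :
          Tendsto (fun _ : ℕ => c) atTop (𝓝 c)).max htend
        have hmax : max c (h ω) = h ω := max_eq_right (hle ω hω)
        simpa [hhn, hmax] using this
      · have hωc : ω ∈ Aᶜ := hω
        simp only [Pi.add_apply, Set.indicator_of_notMem hω, Set.indicator_of_mem hωc, zero_add]
        exact tendsto_const_nhds
  exact ge_of_tendsto' hconv hstep

end AuxMono2

section AuxMain

variable {Ω : Type*} {mG : MeasurableSpace Ω} {T : (Ω → ℝ) → ℝ}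

lemma slice_null (hMo : GMo mG T) (hPC : GPC mG T) {u v : Ω → ℝ}
    (hu : BddMeas mG u) (hv : BddMeas mG v)
    (huv : ∀ A : Set Ω, MeasurableSet[mG] A → T (A.indicator u) = T (A.indicator v))
    (n : ℕ) (p : ℤ) :
    {ω | u ω ≤ (p : ℝ) * (1 / ((n : ℝ) + 1)) ∧
      ((p : ℝ) + 1) * (1 / ((n : ℝ) + 1)) ≤ v ω} ∈ NullG mG T := by
  set δ : ℝ := 1 / ((n : ℝ) + 1) with hδ
  have hδpos : 0 < δ := by positivity
  set c₁ : ℝ := (p : ℝ) * δ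
  set c₂ : ℝ := ((p : ℝ) + 1) * δ
  have hc : c₁ < c₂ := by
    have : c₂ = c₁ + δ := by ring
    linarith
  set B : Set Ω := {ω | u ω ≤ c₁ ∧ c₂ ≤ v ω} with hBdef
  have hB : MeasurableSet[mG] B := by
    have : B = {ω | u ω ≤ c₁} ∩ {ω | c₂ ≤ v ω} := rfl
    rw [this]
    exact (measurableSet_le hu.1 measurable_const).inter
      (measurableSet_le measurable_const hv.1)
  by_cases hnull : B ∈ NullG mG T
  · exact hnull
  · exfalso
    have hz : Bᶜ.indicator (0 : Ω → ℝ) = 0 := by funext ω; simp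
    have t1 : T (B.indicator u) ≤ T (B.indicator (fun _ => c₁)) := by
      have := mono_le hMo hPC hB hu (fun ω hω => hω.1) bddMeas_zero (c := c₁)
      simpa [hz] using this
    have t2 : T (B.indicator (fun _ => c₁)) < T (B.indicator (fun _ => c₂)) := by
      have := hMo c₁ c₂ hc 0 bddMeas_zero B hB hnull
      simpa [hz] using this
    have t3 : T (B.indicator (fun _ => c₂)) ≤ T (B.indicator v) := by
      have := mono_ge hMo hPC hB hv (fun ω hω => hω.2) bddMeas_zero (c := c₂)
      simpa [hz] using this
    have teq : T (B.indicator u) = T (B.indicator v) := huv B hB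
    linarith

end AuxMain

theorem stmt7 {Ω : Type*} (mF mG : MeasurableSpace Ω) (hsub : mG ≤ mF)
    (T : (Ω → ℝ) → ℝ) (hT0 : T 0 = 0) (hMo : GMo mG T) (hQL : GQL mG T) (hPC : GPC mG T)
    (f : Ω → ℝ) (hf : BddMeas mF f)
    (gh gt : Ω → ℝ) (hgh : BddMeas mG gh) (hgt : BddMeas mG gt)
    (h1 : ∀ A : Set Ω, MeasurableSet[mG] A → T (A.indicator f) = T (A.indicator gh))
    (h2 : ∀ A : Set Ω, MeasurableSet[mG] A → T (A.indicator f) = T (A.indicator gt)) :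
    {ω | gh ω ≠ gt ω} ∈ NullG mG T := by
  have hth : ∀ A : Set Ω, MeasurableSet[mG] A →
      T (A.indicator gt) = T (A.indicator gh) :=
    fun A hA => (h2 A hA).symm.trans (h1 A hA)
  have hht : ∀ A : Set Ω, MeasurableSet[mG] A →
      T (A.indicator gh) = T (A.indicator gt) :=
    fun A hA => (h1 A hA).symm.trans (h2 A hA)
  set Bset : (Ω → ℝ) → (Ω → ℝ) → ℕ × ℤ → Set Ω := fun u v q =>
    {ω | u ω ≤ (q.2 : ℝ) * (1 / ((q.1 : ℝ) + 1)) ∧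
      ((q.2 : ℝ) + 1) * (1 / ((q.1 : ℝ) + 1)) ≤ v ω} with hBset
  have hUA : (⋃ k : ℕ, Bset gt gh (Denumerable.ofNat (ℕ × ℤ) k)) ∈ NullG mG T :=
    nullG_iUnion hPC _ (fun k =>
      slice_null hMo hPC hgt hgh hth (Denumerable.ofNat (ℕ × ℤ) k).1
        (Denumerable.ofNat (ℕ × ℤ) k).2)
  have hUB : (⋃ k : ℕ, Bset gh gt (Denumerable.ofNat (ℕ × ℤ) k)) ∈ NullG mG T :=
    nullG_iUnion hPC _ (fun k =>
      slice_null hMo hPC hgh hgt hht (Denumerable.ofNat (ℕ × ℤ) k).1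
        (Denumerable.ofNat (ℕ × ℤ) k).2)
  have hU := nullG_union hUA hUB
  refine nullG_subset hU ?_ ?_
  · have : {ω | gh ω ≠ gt ω} = {ω | gh ω = gt ω}ᶜ := rfl
    rw [this]
    exact (measurableSet_eq_fun hgh.1 hgt.1).compl
  · -- the subset property
    intro ω hω
    have hcover : ∀ u v : Ω → ℝ, u ω < v ω →
        ∃ q : ℕ × ℤ, ω ∈ Bset u v q := by
      intro u v huv
      set d := v ω - u ω with hd
      have hdpos : 0 < d := by simp [hd]; linarith
      obtain ⟨n, hn⟩ := exists_nat_one_div_lt (half_pos hdpos)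
      set δ : ℝ := 1 / ((n : ℝ) + 1) with hδ
      have hδpos : 0 < δ := by positivity
      set p : ℤ := ⌈u ω / δ⌉ with hp
      refine ⟨(n, p), ?_, ?_⟩
      · show u ω ≤ (p : ℝ) * δ
        have : u ω / δ ≤ (p : ℝ) := Int.le_ceil _
        calc u ω = u ω / δ * δ := by field_simp
          _ ≤ (p : ℝ) * δ := by nlinarith
      · show ((p : ℝ) + 1) * δ ≤ v ω
        have h4 : (p : ℝ) < u ω / δ + 1 := Int.ceil_lt_add_one _
        have h5 : (p : ℝ) * δ < u ω + δ := by
          have : (u ω / δ + 1) * δ = u ω + δ := by field_simp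
          nlinarith
        have h6 : 2 * δ < d := by
          have : δ < d / 2 := hn
          linarith
        have : ((p : ℝ) + 1) * δ = (p : ℝ) * δ + δ := by ring
        rw [this, hd] at *
        linarith
    rcases Ne.lt_or_gt hω with hlt | hlt
    · -- gh ω < gt ω : belongs to the second union
      obtain ⟨q, hq⟩ := hcover gh gt hlt
      refine Set.mem_union_right _ (Set.mem_iUnion.mpr ⟨Encodable.encode q, ?_⟩)
      rw [Denumerable.ofNat_encode]
      exact hq
    · -- gt ω < gh ω : belongs to the first union
      obtain ⟨q, hq⟩ := hcover gt gh hlt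
      refine Set.mem_union_left _ (Set.mem_iUnion.mpr ⟨Encodable.encode q, ?_⟩)
      rw [Denumerable.ofNat_encode]
      exact hq
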